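/- arXiv:1609.00503 — 4 statements merged into one kernel-verified Lean document; each statement's English description precedes it below -/
import Mathlib

section
/- Let F : ℝ × ℝ → ℝ be a smooth function with F(x,t) > 0 for all (x,t) ∈ ℝ², and suppose F satisfies the bilinear Boussinesq equation F·F_tt − (F_t)² + F·F_xx − (F_x)² − (1/3)(F·F_xxxx − 4·F_x·F_xxx + 3·(F_xx)²) = 0 at every point of ℝ². Then the function u(x,t) = 2·∂²/∂x² [ln F(x,t)] satisfies the Boussinesq equation u_tt + u_xx − (u²)_xx − (1/3)·u_xxxx = 0 at every point of ℝ². -/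
/-- Partial derivative in the first (space) variable. -/
noncomputable def dX (f : ℝ → ℝ → ℝ) : ℝ → ℝ → ℝ := fun x t => deriv (fun x' => f x' t) x

/-- Partial derivative in the second (time) variable. -/
noncomputable def dT (f : ℝ → ℝ → ℝ) : ℝ → ℝ → ℝ := fun x t => deriv (fun t' => f x t') t

/-- The Boussinesq equation `u_tt + u_xx − (u²)_xx − (1/3) u_xxxx = 0` on all of ℝ². -/
def IsBoussinesqSolution (u : ℝ → ℝ → ℝ) : Prop :=
  ∀ x t : ℝ,
    dT (dT u) x t + dX (dX u) x t - dX (dX (fun x' t' => (u x' t') ^ 2)) x t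
      - (1 / 3) * dX (dX (dX (dX u))) x t = 0

/-- The bilinear Boussinesq equation
`F·F_tt − (F_t)² + F·F_xx − (F_x)² − (1/3)(F·F_xxxx − 4 F_x F_xxx + 3 (F_xx)²) = 0`. -/
def IsBilinearBQSolution (F : ℝ → ℝ → ℝ) : Prop :=
  ∀ x t : ℝ,
    F x t * dT (dT F) x t - (dT F x t) ^ 2 + F x t * dX (dX F) x t - (dX F x t) ^ 2
      - (1 / 3) * (F x t * dX (dX (dX (dX F))) x t
          - 4 * dX F x t * dX (dX (dX F)) x t + 3 * (dX (dX F) x t) ^ 2) = 0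

noncomputable def pD (v : ℝ × ℝ) (f : ℝ × ℝ → ℝ) : ℝ × ℝ → ℝ := fun p => fderiv ℝ f p v

lemma contDiff_pD {f : ℝ × ℝ → ℝ} (hf : ContDiff ℝ (⊤ : ℕ∞) f) (v : ℝ × ℝ) :
    ContDiff ℝ (⊤ : ℕ∞) (pD v f) :=
  (hf.fderiv_right (by simp)).clm_apply contDiff_const

lemma pD_add (v : ℝ × ℝ) {f g : ℝ × ℝ → ℝ} {p : ℝ × ℝ}
    (hf : DifferentiableAt ℝ f p) (hg : DifferentiableAt ℝ g p) :
    pD v (fun q => f q + g q) p = pD v f p + pD v g p := by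
  simp only [pD, fderiv_fun_add hf hg, ContinuousLinearMap.add_apply]

lemma pD_sub (v : ℝ × ℝ) {f g : ℝ × ℝ → ℝ} {p : ℝ × ℝ}
    (hf : DifferentiableAt ℝ f p) (hg : DifferentiableAt ℝ g p) :
    pD v (fun q => f q - g q) p = pD v f p - pD v g p := by
  simp only [pD, fderiv_fun_sub hf hg, ContinuousLinearMap.sub_apply]

lemma pD_const_mul (v : ℝ × ℝ) {f : ℝ × ℝ → ℝ} {p : ℝ × ℝ}
    (hf : DifferentiableAt ℝ f p) (c : ℝ) :
    pD v (fun q => c * f q) p = c * pD v f p := by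
  simp only [pD, fderiv_const_mul hf c, ContinuousLinearMap.smul_apply, smul_eq_mul]

lemma pD_mul (v : ℝ × ℝ) {f g : ℝ × ℝ → ℝ} {p : ℝ × ℝ}
    (hf : DifferentiableAt ℝ f p) (hg : DifferentiableAt ℝ g p) :
    pD v (fun q => f q * g q) p = f p * pD v g p + g p * pD v f p := by
  simp only [pD, fderiv_fun_mul hf hg, ContinuousLinearMap.add_apply,
    ContinuousLinearMap.smul_apply, smul_eq_mul]

lemma pD_log (v : ℝ × ℝ) {H : ℝ × ℝ → ℝ} {p : ℝ × ℝ}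
    (hH : DifferentiableAt ℝ H p) (h0 : H p ≠ 0) :
    pD v (fun q => Real.log (H q)) p = (H p)⁻¹ * pD v H p := by
  simp only [pD, (hH.hasFDerivAt.log h0).fderiv, ContinuousLinearMap.smul_apply, smul_eq_mul]

lemma pD_zero (v : ℝ × ℝ) : pD v (fun _ : ℝ × ℝ => (0 : ℝ)) = fun _ => 0 := by
  funext p; simp [pD]

lemma pD_comm {f : ℝ × ℝ → ℝ} (hf : ContDiff ℝ (⊤ : ℕ∞) f) (v w : ℝ × ℝ) :
    pD v (pD w f) = pD w (pD v f) := by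
  funext p
  have hd : DifferentiableAt ℝ (fderiv ℝ f) p :=
    ((hf.fderiv_right (m := (⊤ : ℕ∞)) (by simp)).differentiable (by simp)) p
  have hsym : ∀ u u' : ℝ × ℝ,
      fderiv ℝ (fderiv ℝ f) p u u' = fderiv ℝ (fderiv ℝ f) p u' u :=
    (hf.contDiffAt).isSymmSndFDerivAt (by rw [minSmoothness_of_isRCLikeNormedField]; exact WithTop.coe_le_coe.2 le_top)
  have key : ∀ u u' : ℝ × ℝ, pD u (pD u' f) p = fderiv ℝ (fderiv ℝ f) p u u' := by
    intro u u'
    have h1 : fderiv ℝ (fun q => (fderiv ℝ f q) u') p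
        = ((fderiv ℝ f p).comp (fderiv ℝ (fun _ : ℝ × ℝ => u') p))
          + (fderiv ℝ (fderiv ℝ f) p).flip u' :=
      fderiv_clm_apply hd (differentiableAt_const u')
    have h2 : pD u (pD u' f) p = fderiv ℝ (fun q => (fderiv ℝ f q) u') p u := rfl
    rw [h2, h1]
    simp
  rw [key v w, key w v, hsym v w]

lemma dX_curry {f : ℝ × ℝ → ℝ} (hf : Differentiable ℝ f) :
    dX (fun a b => f (a, b)) = fun a b => pD (1, 0) f (a, b) := by
  funext x t
  have h1 : HasDerivAt (fun x' : ℝ => (x', t)) ((1 : ℝ), (0 : ℝ)) x :=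
    (hasDerivAt_id x).prodMk (hasDerivAt_const x t)
  exact ((hf (x, t)).hasFDerivAt.comp_hasDerivAt x h1).deriv

lemma dT_curry {f : ℝ × ℝ → ℝ} (hf : Differentiable ℝ f) :
    dT (fun a b => f (a, b)) = fun a b => pD (0, 1) f (a, b) := by
  funext x t
  have h1 : HasDerivAt (fun t' : ℝ => (x, t')) ((0 : ℝ), (1 : ℝ)) t :=
    (hasDerivAt_const t x).prodMk (hasDerivAt_id t)
  exact ((hf (x, t)).hasFDerivAt.comp_hasDerivAt t h1).deriv

lemma pD_comb (v : ℝ × ℝ) {A B S C : ℝ × ℝ → ℝ} (hA : Differentiable ℝ A)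
    (hB : Differentiable ℝ B) (hS : Differentiable ℝ S) (hC : Differentiable ℝ C) :
    pD v (fun q => 2 * A q + 2 * B q - 4 * S q - 2/3 * C q)
      = fun q => 2 * pD v A q + 2 * pD v B q - 4 * pD v S q - 2/3 * pD v C q := by
  funext p
  rw [pD_sub v ((((hA p).const_mul 2).fun_add ((hB p).const_mul 2)).fun_sub ((hS p).const_mul 4))
      ((hC p).const_mul (2/3)),
    pD_sub v (((hA p).const_mul 2).fun_add ((hB p).const_mul 2)) ((hS p).const_mul 4),
    pD_add v ((hA p).const_mul 2) ((hB p).const_mul 2),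
    pD_const_mul v (hA p) 2, pD_const_mul v (hB p) 2, pD_const_mul v (hS p) 4,
    pD_const_mul v (hC p) (2/3)]

lemma swap4 {G : ℝ × ℝ → ℝ} (hG : ContDiff ℝ (⊤ : ℕ∞) G) :
    pD (0,1) (pD (0,1) (pD (1,0) (pD (1,0) G)))
      = pD (1,0) (pD (1,0) (pD (0,1) (pD (0,1) G))) := by
  have c1 : pD (0,1) (pD (1,0) G) = pD (1,0) (pD (0,1) G) := pD_comm hG (0,1) (1,0)
  have s1 : pD (0,1) (pD (1,0) (pD (1,0) G)) = pD (1,0) (pD (1,0) (pD (0,1) G)) := by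
    rw [pD_comm (contDiff_pD hG (1,0)) (0,1) (1,0), c1]
  rw [s1, pD_comm (contDiff_pD (contDiff_pD hG (0,1)) (1,0)) (0,1) (1,0),
    pD_comm (contDiff_pD hG (0,1)) (0,1) (1,0)]

lemma key_W2 {G : ℝ × ℝ → ℝ} (hG : ContDiff ℝ (⊤ : ℕ∞) G)
    (R : ∀ p, pD (0,1) (pD (0,1) G) p + pD (1,0) (pD (1,0) G) p
        - 2 * (pD (1,0) (pD (1,0) G) p)^2
        - 1/3 * pD (1,0) (pD (1,0) (pD (1,0) (pD (1,0) G))) p = 0) :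
    ∀ p, 2 * pD (1,0) (pD (1,0) (pD (0,1) (pD (0,1) G))) p
        + 2 * pD (1,0) (pD (1,0) (pD (1,0) (pD (1,0) G))) p
        - 4 * pD (1,0) (pD (1,0) (fun q => (pD (1,0) (pD (1,0) G) q)^2)) p
        - 2/3 * pD (1,0) (pD (1,0) (pD (1,0) (pD (1,0) (pD (1,0) (pD (1,0) G))))) p = 0 := by
  set A : ℝ × ℝ → ℝ := pD (0,1) (pD (0,1) G) with hAdef
  set B : ℝ × ℝ → ℝ := pD (1,0) (pD (1,0) G) with hBdef
  set S : ℝ × ℝ → ℝ := fun q => (B q)^2 with hSdef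
  set C : ℝ × ℝ → ℝ := pD (1,0) (pD (1,0) (pD (1,0) (pD (1,0) G))) with hCdef
  have hA : ContDiff ℝ (⊤ : ℕ∞) A := contDiff_pD (contDiff_pD hG _) _
  have hB : ContDiff ℝ (⊤ : ℕ∞) B := contDiff_pD (contDiff_pD hG _) _
  have hS : ContDiff ℝ (⊤ : ℕ∞) S := hB.pow 2
  have hC : ContDiff ℝ (⊤ : ℕ∞) C := contDiff_pD (contDiff_pD hB _) _
  have W0 : (fun q => 2 * A q + 2 * B q - 4 * S q - 2/3 * C q) = fun _ => (0:ℝ) := by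
    funext p
    have hR := R p
    have hSp : S p = (B p)^2 := rfl
    rw [hSp]
    linarith [hR]
  have W1 : (fun q => 2 * pD (1,0) A q + 2 * pD (1,0) B q - 4 * pD (1,0) S q
      - 2/3 * pD (1,0) C q) = fun _ => (0:ℝ) := by
    rw [← pD_comb (1,0) (hA.differentiable (by simp)) (hB.differentiable (by simp))
      (hS.differentiable (by simp)) (hC.differentiable (by simp)), W0, pD_zero]
  have W2 : (fun q => 2 * pD (1,0) (pD (1,0) A) q + 2 * pD (1,0) (pD (1,0) B) q
      - 4 * pD (1,0) (pD (1,0) S) q - 2/3 * pD (1,0) (pD (1,0) C) q) = fun _ => (0:ℝ) := by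
    rw [← pD_comb (1,0) ((contDiff_pD hA _).differentiable (by simp))
      ((contDiff_pD hB _).differentiable (by simp)) ((contDiff_pD hS _).differentiable (by simp))
      ((contDiff_pD hC _).differentiable (by simp)), W1, pD_zero]
  intro p
  exact congrFun W2 p

lemma key_R {H : ℝ × ℝ → ℝ} (hH : ContDiff ℝ (⊤ : ℕ∞) H) (h0 : ∀ p, 0 < H p)
    (hb : ∀ p, H p * pD (0,1) (pD (0,1) H) p - (pD (0,1) H p)^2
        + H p * pD (1,0) (pD (1,0) H) p - (pD (1,0) H p)^2
        - 1/3 * (H p * pD (1,0) (pD (1,0) (pD (1,0) (pD (1,0) H))) p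
            - 4 * pD (1,0) H p * pD (1,0) (pD (1,0) (pD (1,0) H)) p
            + 3 * (pD (1,0) (pD (1,0) H) p)^2) = 0) :
    ∀ p, pD (0,1) (pD (0,1) (fun q => Real.log (H q))) p
        + pD (1,0) (pD (1,0) (fun q => Real.log (H q))) p
        - 2 * (pD (1,0) (pD (1,0) (fun q => Real.log (H q))) p)^2
        - 1/3 * pD (1,0) (pD (1,0) (pD (1,0) (pD (1,0) (fun q => Real.log (H q))))) p = 0 := by
  set G : ℝ × ℝ → ℝ := fun q => Real.log (H q) with hGdef
  have hne : ∀ p, H p ≠ 0 := fun p => ne_of_gt (h0 p)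
  have hG : ContDiff ℝ (⊤ : ℕ∞) G := by
    rw [contDiff_iff_contDiffAt]
    intro p
    exact (Real.contDiffAt_log.2 (hne p)).comp p hH.contDiffAt
  have dH : Differentiable ℝ H := hH.differentiable (by simp)
  have dG1 : ∀ v, Differentiable ℝ (pD v G) :=
    fun v => (contDiff_pD hG v).differentiable (by simp)
  have dG2 : ∀ v, Differentiable ℝ (pD v (pD v G)) :=
    fun v => (contDiff_pD (contDiff_pD hG v) v).differentiable (by simp)
  have dG3 : Differentiable ℝ (pD (1,0) (pD (1,0) (pD (1,0) G))) :=
    (contDiff_pD (contDiff_pD (contDiff_pD hG _) _) _).differentiable (by simp)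
  have dH1 : ∀ v, Differentiable ℝ (pD v H) :=
    fun v => (contDiff_pD hH v).differentiable (by simp)
  have dH2 : Differentiable ℝ (pD (1,0) (pD (1,0) H)) :=
    (contDiff_pD (contDiff_pD hH _) _).differentiable (by simp)
  have E1 : ∀ v, pD v H = fun q => H q * pD v G q := by
    intro v
    funext q
    have hl := pD_log v (dH q) (hne q)
    rw [hGdef, hl, mul_inv_cancel_left₀ (hne q)]
  have E2 : ∀ v, pD v (pD v H)
      = fun q => H q * pD v (pD v G) q + pD v G q * pD v H q := by
    intro v
    funext q
    conv_lhs => rw [E1 v]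
    exact pD_mul v (dH q) (dG1 v q)
  have E3 : pD (1,0) (pD (1,0) (pD (1,0) H))
      = fun q => (H q * pD (1,0) (pD (1,0) (pD (1,0) G)) q
            + pD (1,0) (pD (1,0) G) q * pD (1,0) H q)
          + (pD (1,0) G q * pD (1,0) (pD (1,0) H) q
            + pD (1,0) H q * pD (1,0) (pD (1,0) G) q) := by
    funext q
    conv_lhs => rw [E2 (1,0)]
    rw [pD_add (1,0) (dH.fun_mul (dG2 (1,0)) q) ((dG1 (1,0)).fun_mul (dH1 (1,0)) q),
      pD_mul (1,0) (dH q) (dG2 (1,0) q), pD_mul (1,0) (dG1 (1,0) q) (dH1 (1,0) q)]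
  have E4 : pD (1,0) (pD (1,0) (pD (1,0) (pD (1,0) H)))
      = fun q => ((H q * pD (1,0) (pD (1,0) (pD (1,0) (pD (1,0) G))) q
            + pD (1,0) (pD (1,0) (pD (1,0) G)) q * pD (1,0) H q)
          + (pD (1,0) (pD (1,0) G) q * pD (1,0) (pD (1,0) H) q
            + pD (1,0) H q * pD (1,0) (pD (1,0) (pD (1,0) G)) q))
        + ((pD (1,0) G q * pD (1,0) (pD (1,0) (pD (1,0) H)) q
            + pD (1,0) (pD (1,0) H) q * pD (1,0) (pD (1,0) G) q)
          + (pD (1,0) H q * pD (1,0) (pD (1,0) (pD (1,0) G)) q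
            + pD (1,0) (pD (1,0) G) q * pD (1,0) (pD (1,0) H) q)) := by
    funext q
    conv_lhs => rw [E3]
    rw [pD_add (1,0)
        ((dH.fun_mul (dG3)).fun_add ((dG2 (1,0)).fun_mul (dH1 (1,0))) q)
        (((dG1 (1,0)).fun_mul dH2).fun_add ((dH1 (1,0)).fun_mul (dG2 (1,0))) q),
      pD_add (1,0) (dH.fun_mul dG3 q) ((dG2 (1,0)).fun_mul (dH1 (1,0)) q),
      pD_add (1,0) ((dG1 (1,0)).fun_mul dH2 q) ((dH1 (1,0)).fun_mul (dG2 (1,0)) q),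
      pD_mul (1,0) (dH q) (dG3 q), pD_mul (1,0) (dG2 (1,0) q) (dH1 (1,0) q),
      pD_mul (1,0) (dG1 (1,0) q) (dH2 q), pD_mul (1,0) (dH1 (1,0) q) (dG2 (1,0) q)]
  intro p
  have k1 := congrFun (E1 (1,0)) p
  have k2 := congrFun (E2 (1,0)) p
  have k3 := congrFun E3 p
  have k4 := congrFun E4 p
  have l1 := congrFun (E1 (0,1)) p
  have l2 := congrFun (E2 (0,1)) p
  have hbp := hb p
  have K2 : pD (1,0) (pD (1,0) H) p
      = H p * ((pD (1,0) G p)^2 + pD (1,0) (pD (1,0) G) p) := by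
    rw [k2, k1]; ring
  have K3 : pD (1,0) (pD (1,0) (pD (1,0) H)) p
      = H p * ((pD (1,0) G p)^3 + 3 * pD (1,0) G p * pD (1,0) (pD (1,0) G) p
          + pD (1,0) (pD (1,0) (pD (1,0) G)) p) := by
    rw [k3, K2, k1]; ring
  have K4 : pD (1,0) (pD (1,0) (pD (1,0) (pD (1,0) H))) p
      = H p * ((pD (1,0) G p)^4 + 6 * (pD (1,0) G p)^2 * pD (1,0) (pD (1,0) G) p
          + 3 * (pD (1,0) (pD (1,0) G) p)^2
          + 4 * pD (1,0) G p * pD (1,0) (pD (1,0) (pD (1,0) G)) p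
          + pD (1,0) (pD (1,0) (pD (1,0) (pD (1,0) G))) p) := by
    rw [k4, K3, K2, k1]; ring
  have L2 : pD (0,1) (pD (0,1) H) p
      = H p * ((pD (0,1) G p)^2 + pD (0,1) (pD (0,1) G) p) := by
    rw [l2, l1]; ring
  rw [K2, K3, K4, L2, k1, l1] at hbp
  have hkey : H p ^ 2 * (pD (0,1) (pD (0,1) G) p + pD (1,0) (pD (1,0) G) p
      - 2 * (pD (1,0) (pD (1,0) G) p)^2
      - 1/3 * pD (1,0) (pD (1,0) (pD (1,0) (pD (1,0) G))) p) = 0 := by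
    linear_combination hbp
  have := (mul_eq_zero.mp hkey).resolve_left (pow_ne_zero 2 (hne p))
  linarith [this]

lemma pD_const_mul_fun (v : ℝ × ℝ) {f : ℝ × ℝ → ℝ} (hf : Differentiable ℝ f) (c : ℝ) :
    pD v (fun q => c * f q) = fun q => c * pD v f q :=
  funext fun p => pD_const_mul v (hf p) c

lemma key_main {G : ℝ × ℝ → ℝ} (hG : ContDiff ℝ (⊤ : ℕ∞) G)
    (W : ∀ p, 2 * pD (1,0) (pD (1,0) (pD (0,1) (pD (0,1) G))) p
        + 2 * pD (1,0) (pD (1,0) (pD (1,0) (pD (1,0) G))) p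
        - 4 * pD (1,0) (pD (1,0) (fun q => (pD (1,0) (pD (1,0) G) q)^2)) p
        - 2/3 * pD (1,0) (pD (1,0) (pD (1,0) (pD (1,0) (pD (1,0) (pD (1,0) G))))) p = 0)
    (x t : ℝ) :
    dT (dT (fun a b => 2 * pD (1,0) (pD (1,0) G) (a, b))) x t
      + dX (dX (fun a b => 2 * pD (1,0) (pD (1,0) G) (a, b))) x t
      - dX (dX (fun a b => (2 * pD (1,0) (pD (1,0) G) (a, b))^2)) x t
      - 1 / 3 * dX (dX (dX (dX (fun a b => 2 * pD (1,0) (pD (1,0) G) (a, b))))) x t = 0 := by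
  have hB : ContDiff ℝ (⊤ : ℕ∞) (pD (1,0) (pD (1,0) G)) := contDiff_pD (contDiff_pD hG _) _
  have hU : ContDiff ℝ (⊤ : ℕ∞) (fun q => 2 * pD (1,0) (pD (1,0) G) q) := contDiff_const.mul hB
  have hS : ContDiff ℝ (⊤ : ℕ∞) (fun q => (pD (1,0) (pD (1,0) G) q)^2) := hB.pow 2
  have hSq : ContDiff ℝ (⊤ : ℕ∞) (fun q => (2 * pD (1,0) (pD (1,0) G) q)^2) :=
    (contDiff_const.mul hB).pow 2
  have a1 : dT (fun a b => 2 * pD (1,0) (pD (1,0) G) (a, b))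
      = fun a b => pD (0,1) (fun q => 2 * pD (1,0) (pD (1,0) G) q) (a, b) :=
    dT_curry (hU.differentiable (by simp))
  have a2 : dT (fun a b => pD (0,1) (fun q => 2 * pD (1,0) (pD (1,0) G) q) (a, b))
      = fun a b => pD (0,1) (pD (0,1) (fun q => 2 * pD (1,0) (pD (1,0) G) q)) (a, b) :=
    dT_curry ((contDiff_pD hU _).differentiable (by simp))
  have b1 : dX (fun a b => 2 * pD (1,0) (pD (1,0) G) (a, b))
      = fun a b => pD (1,0) (fun q => 2 * pD (1,0) (pD (1,0) G) q) (a, b) :=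
    dX_curry (hU.differentiable (by simp))
  have b2 : dX (fun a b => pD (1,0) (fun q => 2 * pD (1,0) (pD (1,0) G) q) (a, b))
      = fun a b => pD (1,0) (pD (1,0) (fun q => 2 * pD (1,0) (pD (1,0) G) q)) (a, b) :=
    dX_curry ((contDiff_pD hU _).differentiable (by simp))
  have b3 : dX (fun a b => pD (1,0) (pD (1,0) (fun q => 2 * pD (1,0) (pD (1,0) G) q)) (a, b))
      = fun a b => pD (1,0) (pD (1,0) (pD (1,0) (fun q => 2 * pD (1,0) (pD (1,0) G) q))) (a, b) :=
    dX_curry ((contDiff_pD (contDiff_pD hU _) _).differentiable (by simp))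
  have b4 : dX (fun a b =>
        pD (1,0) (pD (1,0) (pD (1,0) (fun q => 2 * pD (1,0) (pD (1,0) G) q))) (a, b))
      = fun a b =>
        pD (1,0) (pD (1,0) (pD (1,0) (pD (1,0) (fun q => 2 * pD (1,0) (pD (1,0) G) q)))) (a, b) :=
    dX_curry ((contDiff_pD (contDiff_pD (contDiff_pD hU _) _) _).differentiable (by simp))
  have sc1 : dX (fun a b => (2 * pD (1,0) (pD (1,0) G) (a, b))^2)
      = fun a b => pD (1,0) (fun q => (2 * pD (1,0) (pD (1,0) G) q)^2) (a, b) :=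
    dX_curry (hSq.differentiable (by simp))
  have sc2 : dX (fun a b => pD (1,0) (fun q => (2 * pD (1,0) (pD (1,0) G) q)^2) (a, b))
      = fun a b => pD (1,0) (pD (1,0) (fun q => (2 * pD (1,0) (pD (1,0) G) q)^2)) (a, b) :=
    dX_curry ((contDiff_pD hSq _).differentiable (by simp))
  simp only [a1, a2, b1, b2, b3, b4, sc1, sc2]
  have t1 : pD (0,1) (fun q => 2 * pD (1,0) (pD (1,0) G) q)
      = fun q => 2 * pD (0,1) (pD (1,0) (pD (1,0) G)) q :=
    pD_const_mul_fun _ (hB.differentiable (by simp)) 2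
  have t2 : pD (0,1) (fun q => 2 * pD (0,1) (pD (1,0) (pD (1,0) G)) q)
      = fun q => 2 * pD (0,1) (pD (0,1) (pD (1,0) (pD (1,0) G))) q :=
    pD_const_mul_fun _ ((contDiff_pD hB _).differentiable (by simp)) 2
  have u1 : pD (1,0) (fun q => 2 * pD (1,0) (pD (1,0) G) q)
      = fun q => 2 * pD (1,0) (pD (1,0) (pD (1,0) G)) q :=
    pD_const_mul_fun _ (hB.differentiable (by simp)) 2
  have u2 : pD (1,0) (fun q => 2 * pD (1,0) (pD (1,0) (pD (1,0) G)) q)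
      = fun q => 2 * pD (1,0) (pD (1,0) (pD (1,0) (pD (1,0) G))) q :=
    pD_const_mul_fun _ ((contDiff_pD hB _).differentiable (by simp)) 2
  have u3 : pD (1,0) (fun q => 2 * pD (1,0) (pD (1,0) (pD (1,0) (pD (1,0) G))) q)
      = fun q => 2 * pD (1,0) (pD (1,0) (pD (1,0) (pD (1,0) (pD (1,0) G)))) q :=
    pD_const_mul_fun _ ((contDiff_pD (contDiff_pD hB _) _).differentiable (by simp)) 2
  have u4 : pD (1,0) (fun q => 2 * pD (1,0) (pD (1,0) (pD (1,0) (pD (1,0) (pD (1,0) G)))) q)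
      = fun q => 2 * pD (1,0) (pD (1,0) (pD (1,0) (pD (1,0) (pD (1,0) (pD (1,0) G))))) q :=
    pD_const_mul_fun _ ((contDiff_pD (contDiff_pD (contDiff_pD hB _) _) _).differentiable (by simp)) 2
  have s0 : (fun q => (2 * pD (1,0) (pD (1,0) G) q)^2)
      = fun q => 4 * (pD (1,0) (pD (1,0) G) q)^2 := by
    funext q; ring
  have s1 : pD (1,0) (fun q => 4 * (pD (1,0) (pD (1,0) G) q)^2)
      = fun q => 4 * pD (1,0) (fun q' => (pD (1,0) (pD (1,0) G) q')^2) q :=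
    pD_const_mul_fun _ (hS.differentiable (by simp)) 4
  have s2 : pD (1,0) (fun q => 4 * pD (1,0) (fun q' => (pD (1,0) (pD (1,0) G) q')^2) q)
      = fun q => 4 * pD (1,0) (pD (1,0) (fun q' => (pD (1,0) (pD (1,0) G) q')^2)) q :=
    pD_const_mul_fun _ ((contDiff_pD hS _).differentiable (by simp)) 4
  have sw := swap4 hG
  simp only [t1, t2, u1, u2, u3, u4, s0, s1, s2, sw]
  have hW := W (x, t)
  linarith [hW]

theorem boussinesq_of_bilinear (F : ℝ → ℝ → ℝ)
    (hF : ContDiff ℝ (⊤ : ℕ∞) (fun p : ℝ × ℝ => F p.1 p.2))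
    (hpos : ∀ x t : ℝ, 0 < F x t)
    (hbil : IsBilinearBQSolution F) :
    IsBoussinesqSolution (fun x t => 2 * dX (dX (fun x' t' => Real.log (F x' t'))) x t) := by
  have dH : Differentiable ℝ (fun p : ℝ × ℝ => F p.1 p.2) := hF.differentiable (by simp)
  have h0 : ∀ p : ℝ × ℝ, 0 < F p.1 p.2 := fun p => hpos p.1 p.2
  have hGc : ContDiff ℝ (⊤ : ℕ∞) (fun q : ℝ × ℝ => Real.log (F q.1 q.2)) := by
    rw [contDiff_iff_contDiffAt]
    intro p
    exact (Real.contDiffAt_log.2 (ne_of_gt (h0 p))).comp p hF.contDiffAt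
  -- curry equalities for F
  have eX1 : dX F = fun a b => pD (1,0) (fun p : ℝ × ℝ => F p.1 p.2) (a, b) := dX_curry dH
  have eX2 : dX (dX F)
      = fun a b => pD (1,0) (pD (1,0) (fun p : ℝ × ℝ => F p.1 p.2)) (a, b) := by
    rw [eX1]; exact dX_curry ((contDiff_pD hF _).differentiable (by simp))
  have eX3 : dX (dX (dX F))
      = fun a b => pD (1,0) (pD (1,0) (pD (1,0) (fun p : ℝ × ℝ => F p.1 p.2))) (a, b) := by
    rw [eX2]; exact dX_curry ((contDiff_pD (contDiff_pD hF _) _).differentiable (by simp))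
  have eX4 : dX (dX (dX (dX F)))
      = fun a b =>
        pD (1,0) (pD (1,0) (pD (1,0) (pD (1,0) (fun p : ℝ × ℝ => F p.1 p.2)))) (a, b) := by
    rw [eX3]
    exact dX_curry ((contDiff_pD (contDiff_pD (contDiff_pD hF _) _) _).differentiable (by simp))
  have eT1 : dT F = fun a b => pD (0,1) (fun p : ℝ × ℝ => F p.1 p.2) (a, b) := dT_curry dH
  have eT2 : dT (dT F)
      = fun a b => pD (0,1) (pD (0,1) (fun p : ℝ × ℝ => F p.1 p.2)) (a, b) := by
    rw [eT1]; exact dT_curry ((contDiff_pD hF _).differentiable (by simp))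
  have hbil' : ∀ p : ℝ × ℝ,
      F p.1 p.2 * pD (0,1) (pD (0,1) (fun p : ℝ × ℝ => F p.1 p.2)) p
        - (pD (0,1) (fun p : ℝ × ℝ => F p.1 p.2) p)^2
        + F p.1 p.2 * pD (1,0) (pD (1,0) (fun p : ℝ × ℝ => F p.1 p.2)) p
        - (pD (1,0) (fun p : ℝ × ℝ => F p.1 p.2) p)^2
        - 1/3 * (F p.1 p.2
              * pD (1,0) (pD (1,0) (pD (1,0) (pD (1,0) (fun p : ℝ × ℝ => F p.1 p.2)))) p
            - 4 * pD (1,0) (fun p : ℝ × ℝ => F p.1 p.2) p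
              * pD (1,0) (pD (1,0) (pD (1,0) (fun p : ℝ × ℝ => F p.1 p.2))) p
            + 3 * (pD (1,0) (pD (1,0) (fun p : ℝ × ℝ => F p.1 p.2)) p)^2) = 0 := by
    intro p
    have hb0 := hbil p.1 p.2
    rw [eT2, eX4, eX3, eX2, eX1, eT1] at hb0
    simp only [Prod.mk.eta] at hb0
    exact hb0
  have R := key_R hF h0 hbil'
  have W := key_W2 hGc R
  intro x t
  have hglog : (fun x' t' => Real.log (F x' t'))
      = fun a b => Real.log (F (a, b).1 (a, b).2) := rfl
  have g1 : dX (fun a b => Real.log (F (a, b).1 (a, b).2))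
      = fun a b => pD (1,0) (fun q : ℝ × ℝ => Real.log (F q.1 q.2)) (a, b) :=
    dX_curry (hGc.differentiable (by simp))
  have g2 : dX (fun a b => pD (1,0) (fun q : ℝ × ℝ => Real.log (F q.1 q.2)) (a, b))
      = fun a b => pD (1,0) (pD (1,0) (fun q : ℝ × ℝ => Real.log (F q.1 q.2))) (a, b) :=
    dX_curry ((contDiff_pD hGc _).differentiable (by simp))
  simp only [hglog, g1, g2]
  have := key_main hGc W x t
  linarith [this]
end

section
/- The function u(x,t) = 4(1 − x² + t²)/(1 + x² + t²)², which equals 2·∂²/∂x² [ln(1 + x² + t²)], satisfies the Boussinesq equation u_tt + u_xx − (u²)_xx − (1/3)·u_xxxx = 0 for all (x,t) ∈ ℝ². -/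
/-!
Every derivative of `u` is a polynomial over a power of `1 + x² + t²`. Freezing `t` (resp. `x`),
each derivative is one application of the quotient rule for `N z / (c + z²) ^ n`, and after
substituting the resulting closed forms the equation becomes a polynomial identity.
-/

theorem HasDerivAt.div_add_sq_pow {N : ℝ → ℝ} {N' c y : ℝ} (hN : HasDerivAt N N' y)
    (hy : c + y ^ 2 ≠ 0) (n : ℕ) :
    HasDerivAt (fun z => N z / (c + z ^ 2) ^ n)
      ((N' * (c + y ^ 2) - 2 * n * y * N y) / (c + y ^ 2) ^ (n + 1)) y := by
  have hD : HasDerivAt (fun z => c + z ^ 2) (2 * y) y := by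
    simpa using (hasDerivAt_pow 2 y).const_add c
  refine (hN.div (hD.pow n) (pow_ne_zero n hy)).congr_deriv ?_
  simp only [Pi.pow_apply]
  rcases n with _ | n
  · field_simp; ring
  · field_simp; push_cast; ring

section ProfileX

/-! With `c = 1 + t²`, `x ↦ u x t` is `z ↦ 4 (c - z²) / (c + z²)²`. -/

variable {c : ℝ} (hc : 0 < c) (x : ℝ)
include hc

theorem hasDerivAt_log_add_sq :
    HasDerivAt (fun z => Real.log (c + z ^ 2)) (2 * x / (c + x ^ 2)) x :=
  (((hasDerivAt_pow 2 x).const_add c).log (by positivity)).congr_deriv (by norm_num)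

theorem hasDerivAt_two_mul_div_add_sq :
    HasDerivAt (fun z => 2 * z / (c + z ^ 2)) (2 * (c - x ^ 2) / (c + x ^ 2) ^ 2) x := by
  have := ((hasDerivAt_id' x).const_mul 2).div_add_sq_pow (c := c) (by positivity) 1
  simp only [pow_one] at this
  refine this.congr_deriv ?_
  field_simp
  ring

theorem hasDerivAt_profileX₀ :
    HasDerivAt (fun z => 4 * (c - z ^ 2) / (c + z ^ 2) ^ 2)
      (8 * x * (x ^ 2 - 3 * c) / (c + x ^ 2) ^ 3) x := by
  have hN := ((hasDerivAt_pow 2 x).const_sub c).const_mul 4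
  refine (hN.div_add_sq_pow (by positivity) 2).congr_deriv ?_
  field_simp
  ring

theorem hasDerivAt_profileX₁ :
    HasDerivAt (fun z => 8 * z * (z ^ 2 - 3 * c) / (c + z ^ 2) ^ 3)
      (-24 * (x ^ 4 - 6 * c * x ^ 2 + c ^ 2) / (c + x ^ 2) ^ 4) x := by
  have hN := ((hasDerivAt_id' x).const_mul 8).fun_mul ((hasDerivAt_pow 2 x).sub_const (3 * c))
  refine (hN.div_add_sq_pow (by positivity) 3).congr_deriv ?_
  field_simp
  ring

theorem hasDerivAt_profileX₂ :
    HasDerivAt (fun z => -24 * (z ^ 4 - 6 * c * z ^ 2 + c ^ 2) / (c + z ^ 2) ^ 4)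
      (96 * x * (x ^ 4 - 10 * c * x ^ 2 + 5 * c ^ 2) / (c + x ^ 2) ^ 5) x := by
  have hN := (((hasDerivAt_pow 4 x).fun_sub ((hasDerivAt_pow 2 x).const_mul (6 * c))).add_const
    (c ^ 2)).const_mul (-24)
  refine (hN.div_add_sq_pow (by positivity) 4).congr_deriv ?_
  field_simp
  ring

theorem hasDerivAt_profileX₃ :
    HasDerivAt (fun z => 96 * z * (z ^ 4 - 10 * c * z ^ 2 + 5 * c ^ 2) / (c + z ^ 2) ^ 5)
      (-480 * (x ^ 6 - 15 * c * x ^ 4 + 15 * c ^ 2 * x ^ 2 - c ^ 3) / (c + x ^ 2) ^ 6) x := by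
  have hN := ((hasDerivAt_id' x).const_mul 96).fun_mul
    (((hasDerivAt_pow 4 x).fun_sub ((hasDerivAt_pow 2 x).const_mul (10 * c))).add_const (5 * c ^ 2))
  refine (hN.div_add_sq_pow (by positivity) 5).congr_deriv ?_
  field_simp
  ring

end ProfileX

section ProfileT

/-! With `a = 1 - x²` and `b = 1 + x²`, `t ↦ u x t` is `s ↦ 4 (a + s²) / (b + s²)²`. -/

variable {a b : ℝ} (hb : 0 < b) (t : ℝ)
include hb

theorem hasDerivAt_profileT₀ :
    HasDerivAt (fun s => 4 * (a + s ^ 2) / (b + s ^ 2) ^ 2)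
      (8 * t * (b - 2 * a - t ^ 2) / (b + t ^ 2) ^ 3) t := by
  have hN := ((hasDerivAt_pow 2 t).const_add a).const_mul 4
  refine (hN.div_add_sq_pow (by positivity) 2).congr_deriv ?_
  field_simp
  ring

theorem hasDerivAt_profileT₁ :
    HasDerivAt (fun s => 8 * s * (b - 2 * a - s ^ 2) / (b + s ^ 2) ^ 3)
      (8 * (b * (b - 2 * a) + (10 * a - 8 * b) * t ^ 2 + 3 * t ^ 4) / (b + t ^ 2) ^ 4) t := by
  have hN := ((hasDerivAt_id' t).const_mul 8).fun_mul ((hasDerivAt_pow 2 t).const_sub (b - 2 * a))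
  refine (hN.div_add_sq_pow (by positivity) 3).congr_deriv ?_
  field_simp
  ring

end ProfileT

theorem dX_eq_of_hasDerivAt {f g : ℝ → ℝ → ℝ}
    (h : ∀ x t, HasDerivAt (fun x' => f x' t) (g x t) x) : dX f = g :=
  funext fun x => funext fun t => (h x t).deriv

theorem dT_eq_of_hasDerivAt {f g : ℝ → ℝ → ℝ}
    (h : ∀ x t, HasDerivAt (fun t' => f x t') (g x t) t) : dT f = g :=
  funext fun x => funext fun t => (h x t).deriv

theorem dX_dX_sq {f f₁ f₂ : ℝ → ℝ → ℝ}
    (h₁ : ∀ x t, HasDerivAt (fun x' => f x' t) (f₁ x t) x)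
    (h₂ : ∀ x t, HasDerivAt (fun x' => f₁ x' t) (f₂ x t) x) :
    dX (dX fun x t => f x t ^ 2) = fun x t => 2 * (f₁ x t ^ 2 + f x t * f₂ x t) := by
  rw [dX_eq_of_hasDerivAt (g := fun x t => 2 * (f x t * f₁ x t))
    fun x t => ((h₁ x t).fun_pow 2).congr_deriv (by ring)]
  exact dX_eq_of_hasDerivAt fun x t =>
    (((h₁ x t).fun_mul (h₂ x t)).const_mul 2).congr_deriv (by ring)

theorem boussinesq_rational_u1 :
    (∀ x t : ℝ,
      4 * (1 - x ^ 2 + t ^ 2) / (1 + x ^ 2 + t ^ 2) ^ 2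
        = 2 * dX (dX (fun x' t' => Real.log (1 + x' ^ 2 + t' ^ 2))) x t) ∧
    IsBoussinesqSolution (fun x t => 4 * (1 - x ^ 2 + t ^ 2) / (1 + x ^ 2 + t ^ 2) ^ 2) := by
  have hc (t : ℝ) : 0 < 1 + t ^ 2 := by positivity
  have hb (x : ℝ) : 0 < 1 + x ^ 2 := by positivity
  constructor
  · intro x t
    have hlog : (fun x t : ℝ => Real.log (1 + x ^ 2 + t ^ 2))
        = fun x t => Real.log ((1 + t ^ 2) + x ^ 2) := by
      funext x t; ring_nf
    rw [hlog, dX_eq_of_hasDerivAt fun x t => hasDerivAt_log_add_sq (hc t) x,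
      dX_eq_of_hasDerivAt fun x t => hasDerivAt_two_mul_div_add_sq (hc t) x]
    field_simp
    ring
  · intro x t
    have hx : (fun x t : ℝ => 4 * (1 - x ^ 2 + t ^ 2) / (1 + x ^ 2 + t ^ 2) ^ 2)
        = fun x t => 4 * ((1 + t ^ 2) - x ^ 2) / ((1 + t ^ 2) + x ^ 2) ^ 2 := by
      funext x t; ring
    rw [dT_eq_of_hasDerivAt fun x t => hasDerivAt_profileT₀ (a := 1 - x ^ 2) (hb x) t,
      dT_eq_of_hasDerivAt fun x t => hasDerivAt_profileT₁ (a := 1 - x ^ 2) (hb x) t, hx,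
      dX_dX_sq (fun x t => hasDerivAt_profileX₀ (hc t) x)
        (fun x t => hasDerivAt_profileX₁ (hc t) x),
      dX_eq_of_hasDerivAt fun x t => hasDerivAt_profileX₀ (hc t) x,
      dX_eq_of_hasDerivAt fun x t => hasDerivAt_profileX₁ (hc t) x,
      dX_eq_of_hasDerivAt fun x t => hasDerivAt_profileX₂ (hc t) x,
      dX_eq_of_hasDerivAt fun x t => hasDerivAt_profileX₃ (hc t) x]
    field_simp
    ring
end

section
/- The Peregrine solution ψ₁(x,t) = (1 − 4(1 + it)/(x² + t² + 1))·exp(it/2), regarded as a function ℝ² → ℂ, satisfies the focusing nonlinear Schrödinger equation i·ψ_t + ψ_xx + (1/2)|ψ|²·ψ = 0 for all (x,t) ∈ ℝ². -/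
/-- Partial derivative in the first (space) variable, for complex-valued functions. -/
noncomputable def dXC (f : ℝ → ℝ → ℂ) : ℝ → ℝ → ℂ := fun x t => deriv (fun x' => f x' t) x

/-- Partial derivative in the second (time) variable, for complex-valued functions. -/
noncomputable def dTC (f : ℝ → ℝ → ℂ) : ℝ → ℝ → ℂ := fun x t => deriv (fun t' => f x t') t

/-- The focusing nonlinear Schrödinger equation `i ψ_t + ψ_xx + (1/2)|ψ|² ψ = 0`. -/
def IsFocusingNLSSolution (ψ : ℝ → ℝ → ℂ) : Prop :=
  ∀ x t : ℝ,
    Complex.I * dTC ψ x t + dXC (dXC ψ) x t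
      + (1 / 2) * (((‖ψ x t‖ : ℝ) : ℂ)) ^ 2 * ψ x t = 0

/-!
Writing `ψ = q · e^{iωt}` with `ω` real, the phase factor has modulus one and commutes with
`∂ₓ`, so `ψ` solves the focusing NLS iff its envelope solves `i q_t + q_xx + (|q|²/2 − ω) q = 0`.
For the Peregrine breather, `ω = 1/2` and `q = 1 − 4(1 + it)/D` with `D = x² + t² + 1`; its
derivatives and modulus are explicit rational functions, and after clearing powers of `D` the
reduced equation is a polynomial identity modulo `i² = −1`.
-/

open Complex

lemma hasDerivAt_cexp_I_mul (ω t : ℝ) :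
    HasDerivAt (fun s : ℝ => exp (I * ω * s)) (I * ω * exp (I * ω * t)) t := by
  simpa [mul_comm] using ((hasDerivAt_id (t : ℂ)).const_mul (I * ω)).cexp.comp_ofReal

lemma norm_mul_cexp_I_mul (z : ℂ) (ω t : ℝ) : ‖z * exp (I * ω * t)‖ = ‖z‖ := by
  rw [norm_mul, show I * ω * t = ((ω * t : ℝ) : ℂ) * I by push_cast; ring,
    norm_exp_ofReal_mul_I, mul_one]

lemma dXC_mul_const (f : ℝ → ℝ → ℂ) (g : ℝ → ℂ) :
    dXC (fun x t => f x t * g t) = fun x t => dXC f x t * g t := by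
  ext x t
  exact deriv_mul_const_field _

lemma dTC_mul_cexp_I_mul {q : ℝ → ℝ → ℂ} {x t : ℝ} (ω : ℝ)
    (hq : DifferentiableAt ℝ (q x) t) :
    dTC (fun x t => q x t * exp (I * ω * t)) x t
      = (dTC q x t + I * ω * q x t) * exp (I * ω * t) := by
  have h : HasDerivAt (fun s => q x s * exp (I * ω * s))
      (dTC q x t * exp (I * ω * t) + q x t * (I * ω * exp (I * ω * t))) t :=
    hq.hasDerivAt.mul (hasDerivAt_cexp_I_mul ω t)
  rw [dTC, h.deriv]
  ring

theorem isFocusingNLSSolution_mul_cexp_iff {q : ℝ → ℝ → ℂ} (ω : ℝ)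
    (hq : ∀ x t, DifferentiableAt ℝ (q x) t) :
    IsFocusingNLSSolution (fun x t => q x t * exp (I * ω * t)) ↔
      ∀ x t, I * dTC q x t + dXC (dXC q) x t + ((1 / 2) * (‖q x t‖ : ℂ) ^ 2 - ω) * q x t = 0 := by
  have factor_phase (x t : ℝ) :
      I * dTC (fun x t => q x t * exp (I * ω * t)) x t
        + dXC (dXC fun x t => q x t * exp (I * ω * t)) x t
        + (1 / 2) * (‖q x t * exp (I * ω * t)‖ : ℂ) ^ 2 * (q x t * exp (I * ω * t))
      = (I * dTC q x t + dXC (dXC q) x t + ((1 / 2) * (‖q x t‖ : ℂ) ^ 2 - ω) * q x t)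
        * exp (I * ω * t) := by
    rw [dTC_mul_cexp_I_mul ω (hq x t), dXC_mul_const, dXC_mul_const, norm_mul_cexp_I_mul]
    linear_combination (ω * q x t * exp (I * ω * t)) * I_sq
  simp only [IsFocusingNLSSolution, factor_phase, mul_eq_zero, exp_ne_zero, or_false]

noncomputable def peregrineEnvelope (x t : ℝ) : ℂ := 1 - 4 * (1 + I * t) / (x ^ 2 + t ^ 2 + 1)

lemma peregrine_denom_ne_zero (x t : ℝ) : (x : ℂ) ^ 2 + (t : ℂ) ^ 2 + 1 ≠ 0 := by
  norm_cast
  positivity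

lemma hasDerivAt_peregrine_denom_left (x t : ℝ) :
    HasDerivAt (fun z : ℂ => z ^ 2 + t ^ 2 + 1) (2 * (x : ℂ)) x := by
  simpa using ((hasDerivAt_pow 2 (x : ℂ)).add_const ((t : ℂ) ^ 2)).add_const 1

lemma dXC_peregrineEnvelope (x t : ℝ) :
    dXC peregrineEnvelope x t = 8 * x * (1 + I * t) / (x ^ 2 + t ^ 2 + 1) ^ 2 := by
  have h := ((hasDerivAt_const (x : ℂ) (4 * (1 + I * t))).fun_div
    (hasDerivAt_peregrine_denom_left x t) (peregrine_denom_ne_zero x t)).const_sub 1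
  refine h.comp_ofReal.deriv.trans ?_
  ring

lemma dXC_dXC_peregrineEnvelope (x t : ℝ) :
    dXC (dXC peregrineEnvelope) x t
      = 8 * (1 + I * t) * (t ^ 2 + 1 - 3 * x ^ 2) / (x ^ 2 + t ^ 2 + 1) ^ 3 := by
  have hN : HasDerivAt (fun z : ℂ => 8 * z * (1 + I * t)) (8 * (1 + I * t)) x := by
    simpa using ((hasDerivAt_id (x : ℂ)).const_mul 8).mul_const (1 + I * t)
  have h := hN.fun_div ((hasDerivAt_peregrine_denom_left x t).fun_pow 2)
    (pow_ne_zero 2 (peregrine_denom_ne_zero x t) :)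
  rw [dXC, funext fun x' => dXC_peregrineEnvelope x' t, h.comp_ofReal.deriv]
  field_simp [peregrine_denom_ne_zero x t]
  ring

lemma hasDerivAt_peregrineEnvelope_right (x t : ℝ) :
    HasDerivAt (peregrineEnvelope x)
      (4 * (2 * t * (1 + I * t) - I * (x ^ 2 + t ^ 2 + 1)) / (x ^ 2 + t ^ 2 + 1) ^ 2) t := by
  have hD : HasDerivAt (fun z : ℂ => x ^ 2 + z ^ 2 + 1) (2 * (t : ℂ)) t := by
    simpa using ((hasDerivAt_pow 2 (t : ℂ)).const_add ((x : ℂ) ^ 2)).add_const 1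
  have hN : HasDerivAt (fun z : ℂ => 4 * (1 + I * z)) (4 * I) t := by
    simpa using (((hasDerivAt_id (t : ℂ)).const_mul I).const_add 1).const_mul 4
  have h := (hN.fun_div hD (peregrine_denom_ne_zero x t)).const_sub 1
  exact h.comp_ofReal.congr_deriv (by ring)

lemma dTC_peregrineEnvelope (x t : ℝ) :
    dTC peregrineEnvelope x t
      = 4 * (2 * t * (1 + I * t) - I * (x ^ 2 + t ^ 2 + 1)) / (x ^ 2 + t ^ 2 + 1) ^ 2 :=
  (hasDerivAt_peregrineEnvelope_right x t).deriv

lemma sq_norm_peregrineEnvelope (x t : ℝ) :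
    ‖peregrineEnvelope x t‖ ^ 2
      = ((x ^ 2 + t ^ 2 - 3) ^ 2 + 16 * t ^ 2) / (x ^ 2 + t ^ 2 + 1) ^ 2 := by
  have h : peregrineEnvelope x t
      = ((1 - 4 / (x ^ 2 + t ^ 2 + 1) : ℝ) : ℂ) + ((-4 * t / (x ^ 2 + t ^ 2 + 1) : ℝ) : ℂ) * I := by
    rw [peregrineEnvelope]
    push_cast
    ring
  rw [Complex.sq_norm, h, normSq_add_mul_I]
  field_simp
  ring

theorem peregrine_solves_NLS :
    IsFocusingNLSSolution
      (fun x t => (1 - 4 * (1 + Complex.I * (t : ℂ)) / ((x : ℂ) ^ 2 + (t : ℂ) ^ 2 + 1))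
        * Complex.exp (Complex.I * (t : ℂ) / 2)) := by
  have half_freq (t : ℝ) : I * t / 2 = I * ((1 / 2 : ℝ) : ℂ) * t := by push_cast; ring
  simp only [half_freq]
  refine (isFocusingNLSSolution_mul_cexp_iff (q := peregrineEnvelope) _
    fun x t => (hasDerivAt_peregrineEnvelope_right x t).differentiableAt).2 fun x t => ?_
  rw [dXC_dXC_peregrineEnvelope, dTC_peregrineEnvelope, ← ofReal_pow ‖_‖,
    sq_norm_peregrineEnvelope, peregrineEnvelope]
  push_cast
  field_simp [peregrine_denom_ne_zero x t]
  linear_combination 8 * ((x : ℂ) ^ 2 + t ^ 2 + 1) * (t ^ 2 - x ^ 2 - 1) * I_sq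
end

section
/- For every real μ one has μ² − 2μ + 2 > 0 and 4μ(μ + 2)/(μ² − 2μ + 2) ≤ 4(2 + √5), with equality if and only if μ = (1 + √5)/2 (the golden mean); in particular the maximum value of the function μ ↦ 4μ(μ + 2)/(μ² − 2μ + 2) over ℝ is 4(2 + √5), attained exactly at μ = (1 + √5)/2. -/
theorem golden_mean_maximum :
    ∀ μ : ℝ,
      0 < μ ^ 2 - 2 * μ + 2 ∧
      4 * μ * (μ + 2) / (μ ^ 2 - 2 * μ + 2) ≤ 4 * (2 + Real.sqrt 5) ∧
      (4 * μ * (μ + 2) / (μ ^ 2 - 2 * μ + 2) = 4 * (2 + Real.sqrt 5)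
        ↔ μ = (1 + Real.sqrt 5) / 2) := by
  intro μ
  have h5 : Real.sqrt 5 ^ 2 = 5 := Real.sq_sqrt (by norm_num)
  have hs : (1:ℝ) ≤ Real.sqrt 5 := by
    nlinarith [Real.sqrt_nonneg 5]
  have hden : 0 < μ ^ 2 - 2 * μ + 2 := by nlinarith [sq_nonneg (μ - 1)]
  refine ⟨hden, ?_, ?_⟩
  · rw [div_le_iff₀ hden]
    nlinarith [sq_nonneg (μ - (1 + Real.sqrt 5) / 2), sq_nonneg μ]
  · constructor
    · intro h
      rw [div_eq_iff (ne_of_gt hden)] at h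
      have key : (μ - (1 + Real.sqrt 5) / 2) ^ 2 = 0 := by nlinarith
      have := pow_eq_zero_iff (n := 2) (by norm_num) |>.mp key
      linarith
    · intro h
      subst h
      rw [div_eq_iff (ne_of_gt hden)]
      nlinarith
end
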